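/- For the matrix σ = [[2,1],[1,2]] : ℤ² → ℤ², the direct limit lim→(ℤ², σ) fits in a short exact sequence 0 → ℤ[1/3] → lim→(ℤ², σ) → ℤ → 0 which splits, so lim→(ℤ², σ) ≅ ℤ[1/3] ⊕ ℤ, with the ℤ[1/3] summand generated by the class of the eigenvector (1,1). -/

import Mathlib

/-!
The functional `v ↦ v₁ - v₀` is `σ`-invariant and `(1,1)` is an eigenvector for `3`, so in the
basis `(1,1), (0,1)` of `ℚ²` the vector `σ⁻ᵏ v` represented by `v` at stage `k` has coordinates
`(q, n)` with `q ∈ ℤ[1/3]` and `n ∈ ℤ`. These coordinates identify `lim→(ℤ², σ)` with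
`ℤ[1/3] × ℤ`, sending the class of `(1,1)` at stage `k` to `(3⁻ᵏ, 0)`; the exact sequence is then
the split sequence of a product.
-/

noncomputable section

/-- The subgroup `ℤ[1/p] ⊆ ℚ` of fractions with denominator a power of `p`. -/
def zOneDiv (p : ℕ) : AddSubgroup ℚ :=
  AddSubgroup.closure {q : ℚ | ∃ n : ℕ, q = 1 / (p : ℚ) ^ n}

/-- The matrix `[[2,1],[1,2]]` as an endomorphism of `ℤ²`. -/
def sigma : Module.End ℤ (Fin 2 → ℤ) := Matrix.toLin' !![2, 1; 1, 2]

/-- The constant directed system `ℤ² → ℤ² → ⋯` with transition map `σ`. -/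
def fSys : ∀ i j : ℕ, i ≤ j → (Fin 2 → ℤ) →ₗ[ℤ] (Fin 2 → ℤ) :=
  fun i j _ => sigma ^ (j - i)

/-- The direct limit `lim→(ℤ², σ)`. -/
def L : Type := Module.DirectLimit (fun _ : ℕ => Fin 2 → ℤ) fSys

instance : AddCommGroup L := Module.DirectLimit.addCommGroup _ fSys

/-- The class in the direct limit of a vector at stage `k`. -/
def ofL (k : ℕ) (v : Fin 2 → ℤ) : L :=
  Module.DirectLimit.of ℤ ℕ (fun _ : ℕ => Fin 2 → ℤ) fSys k v

open Finset

lemma ker_snd_comp_eq_range_symm_comp_inl {G A B : Type*} [AddGroup G] [AddGroup A] [AddGroup B]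
    (e : G ≃+ A × B) :
    ((AddMonoidHom.snd A B).comp e.toAddMonoidHom).ker =
      (e.symm.toAddMonoidHom.comp (AddMonoidHom.inl A B)).range := by
  ext x
  constructor
  · intro hx
    exact ⟨(e x).1, e.symm_apply_eq.2 (Prod.ext rfl hx.symm)⟩
  · rintro ⟨a, rfl⟩
    rw [AddMonoidHom.mem_ker]
    simp

lemma one_div_pow_mem_zOneDiv (p k : ℕ) : 1 / (p : ℚ) ^ k ∈ zOneDiv p :=
  AddSubgroup.subset_closure ⟨k, rfl⟩

lemma intCast_div_pow_mem_zOneDiv (p k : ℕ) (m : ℤ) : (m : ℚ) / (p : ℚ) ^ k ∈ zOneDiv p := by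
  rw [div_eq_mul_one_div, ← zsmul_eq_mul]
  exact zsmul_mem (one_div_pow_mem_zOneDiv p k) m

lemma exists_eq_intCast_div_pow_of_mem_zOneDiv {p : ℕ} (hp : p ≠ 0) {q : ℚ}
    (hq : q ∈ zOneDiv p) : ∃ (k : ℕ) (m : ℤ), q = m / (p : ℚ) ^ k := by
  induction hq using AddSubgroup.closure_induction with
  | mem x hx => obtain ⟨k, rfl⟩ := hx; exact ⟨k, 1, by simp⟩
  | zero => exact ⟨0, 0, by simp⟩
  | add x y _ _ hx hy =>
    obtain ⟨k, m, rfl⟩ := hx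
    obtain ⟨l, n, rfl⟩ := hy
    refine ⟨k + l, m * p ^ l + n * p ^ k, ?_⟩
    have hp' : (p : ℚ) ≠ 0 := by exact_mod_cast hp
    field_simp
    push_cast
    ring
  | neg x _ hx => obtain ⟨k, m, rfl⟩ := hx; exact ⟨k, -m, by push_cast; ring⟩

lemma sigma_apply (v : Fin 2 → ℤ) : sigma v = ![2 * v 0 + v 1, v 0 + 2 * v 1] := by
  ext i
  fin_cases i <;> simp [sigma, Matrix.mulVec, dotProduct, Fin.sum_univ_two]

/-- Since `σ⁻¹ (0,1) = (0,1) - 3⁻¹ (1,1)`, the class of `v = a (1,1) + n (0,1)` at stage `k`,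
i.e. `σ⁻ᵏ v`, is `(a - (1 + 3 + ⋯ + 3ᵏ⁻¹) n) / 3ᵏ • (1,1) + n (0,1)`. -/
def stageCoord (k : ℕ) : (Fin 2 → ℤ) →+ zOneDiv 3 × ℤ :=
  AddMonoidHom.mk'
    (fun v => (⟨_, intCast_div_pow_mem_zOneDiv 3 k (v 0 - (∑ i ∈ range k, 3 ^ i) * (v 1 - v 0))⟩,
      v 1 - v 0))
    fun v w => by
      ext <;> simp only [Pi.add_apply, Prod.mk_add_mk, AddMemClass.mk_add_mk] <;> push_cast <;> ring

lemma stageCoord_apply_fst (k : ℕ) (v : Fin 2 → ℤ) :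
    ((stageCoord k v).1 : ℚ) = (v 0 - (∑ i ∈ range k, (3 : ℚ) ^ i) * (v 1 - v 0)) / 3 ^ k := by
  simp [stageCoord]

lemma stageCoord_apply_snd (k : ℕ) (v : Fin 2 → ℤ) : (stageCoord k v).2 = v 1 - v 0 := rfl

lemma stageCoord_sigma (k : ℕ) (v : Fin 2 → ℤ) :
    stageCoord (k + 1) (sigma v) = stageCoord k v := by
  refine Prod.ext (Subtype.ext ?_) ?_
  · rw [stageCoord_apply_fst, stageCoord_apply_fst, sigma_apply, geom_sum_succ]
    simp only [Matrix.cons_val_zero, Matrix.cons_val_one, Matrix.cons_val_fin_one]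
    push_cast
    field_simp
    ring
  · rw [stageCoord_apply_snd, stageCoord_apply_snd, sigma_apply]
    simp only [Matrix.cons_val_zero, Matrix.cons_val_one, Matrix.cons_val_fin_one]
    ring

lemma stageCoord_sigma_pow (n k : ℕ) (v : Fin 2 → ℤ) :
    stageCoord (k + n) ((sigma ^ n) v) = stageCoord k v := by
  induction n generalizing k v with
  | zero => simp
  | succ n ih =>
    rw [pow_succ, Module.End.mul_apply, show k + (n + 1) = k + 1 + n by omega, ih,
      stageCoord_sigma]

lemma stageCoord_fSys (i j : ℕ) (hij : i ≤ j) (v : Fin 2 → ℤ) :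
    (stageCoord j).toIntLinearMap (fSys i j hij v) = (stageCoord i).toIntLinearMap v := by
  obtain ⟨n, rfl⟩ := Nat.exists_eq_add_of_le hij
  simp only [fSys, Nat.add_sub_cancel_left]
  exact stageCoord_sigma_pow n i v

lemma stageCoord_injective (k : ℕ) : Function.Injective (stageCoord k) := by
  refine (injective_iff_map_eq_zero _).2 fun v hv => ?_
  have hn : v 1 - v 0 = 0 := congrArg Prod.snd hv
  have ha : ((stageCoord k v).1 : ℚ) = 0 := by rw [hv]; rfl
  have hn' : (v 1 : ℚ) - v 0 = 0 := by exact_mod_cast hn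
  rw [stageCoord_apply_fst, hn'] at ha
  have hv0 : v 0 = 0 := by simpa using ha
  have hv1 : v 1 = 0 := by omega
  ext i
  fin_cases i <;> simp [hv0, hv1]

def limToProd : L →+ zOneDiv 3 × ℤ :=
  (Module.DirectLimit.lift ℤ ℕ _ fSys (fun k => (stageCoord k).toIntLinearMap)
    stageCoord_fSys).toAddMonoidHom

lemma limToProd_ofL (k : ℕ) (v : Fin 2 → ℤ) : limToProd (ofL k v) = stageCoord k v :=
  Module.DirectLimit.lift_of (R := ℤ) _ stageCoord_fSys v

lemma limToProd_injective : Function.Injective limToProd :=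
  Module.DirectLimit.lift_injective _ stageCoord_fSys stageCoord_injective

lemma limToProd_surjective : Function.Surjective limToProd := by
  rintro ⟨q, n⟩
  obtain ⟨k, m, hq⟩ := exists_eq_intCast_div_pow_of_mem_zOneDiv (by norm_num) q.2
  set a := m + (∑ i ∈ range k, 3 ^ i) * n
  refine ⟨ofL k ![a, a + n], Prod.ext (Subtype.ext ?_) ?_⟩
  · rw [limToProd_ofL, stageCoord_apply_fst, hq]
    simp [a]
  · simp [limToProd_ofL, stageCoord_apply_snd]

def limEquivProd : L ≃+ zOneDiv 3 × ℤ :=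
  AddEquiv.ofBijective limToProd ⟨limToProd_injective, limToProd_surjective⟩

lemma limEquivProd_ofL (k : ℕ) (v : Fin 2 → ℤ) : limEquivProd (ofL k v) = stageCoord k v :=
  limToProd_ofL k v

lemma limEquivProd_symm_inl_eq_ofL (k : ℕ) {q : zOneDiv 3} (hq : (q : ℚ) = 1 / 3 ^ k) :
    limEquivProd.symm (q, 0) = ofL k ![1, 1] := by
  rw [AddEquiv.symm_apply_eq, limEquivProd_ofL]
  refine Prod.ext (Subtype.ext ?_) ?_
  · simp [hq, stageCoord_apply_fst]
  · simp [stageCoord_apply_snd]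

lemma range_limEquivProd_symm_comp_inl :
    (limEquivProd.symm.toAddMonoidHom.comp (AddMonoidHom.inl _ ℤ)).range =
      AddSubgroup.closure {x : L | ∃ k : ℕ, x = ofL k ![1, 1]} := by
  have htop : AddSubgroup.closure
      ((↑) ⁻¹' {q : ℚ | ∃ n : ℕ, q = 1 / ((3 : ℕ) : ℚ) ^ n} : Set (zOneDiv 3)) = ⊤ :=
    AddSubgroup.closure_closure_coe_preimage
  rw [AddMonoidHom.range_eq_map, ← htop, AddMonoidHom.map_closure]
  congr 1
  ext x
  constructor
  · rintro ⟨q, ⟨k, hk⟩, rfl⟩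
    exact ⟨k, limEquivProd_symm_inl_eq_ofL k (by simpa using hk)⟩
  · rintro ⟨k, rfl⟩
    exact ⟨⟨_, one_div_pow_mem_zOneDiv 3 k⟩, ⟨k, rfl⟩, limEquivProd_symm_inl_eq_ofL k (by simp)⟩

/-- For `σ = [[2,1],[1,2]]`, the direct limit `lim→(ℤ², σ)` fits into a split short exact
sequence `0 → ℤ[1/3] → lim→(ℤ², σ) → ℤ → 0`, where the `ℤ[1/3]` summand is the subgroup
generated by the classes of the eigenvector `(1,1)` at all stages; consequently
`lim→(ℤ², σ) ≅ ℤ[1/3] ⊕ ℤ`. -/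
theorem stmt4 :
    ∃ (j : ↥(zOneDiv 3) →+ L) (π : L →+ ℤ) (s : ℤ →+ L),
      Function.Injective j ∧ Function.Surjective π ∧
      π.ker = j.range ∧ π.comp s = AddMonoidHom.id ℤ ∧
      j.range = AddSubgroup.closure {x : L | ∃ k : ℕ, x = ofL k ![1, 1]} ∧
      Nonempty (L ≃+ ↥(zOneDiv 3) × ℤ) := by
  refine ⟨limEquivProd.symm.toAddMonoidHom.comp (AddMonoidHom.inl _ _),
    (AddMonoidHom.snd _ _).comp limEquivProd.toAddMonoidHom,
    limEquivProd.symm.toAddMonoidHom.comp (AddMonoidHom.inr _ _),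
    limEquivProd.symm.injective.comp (Prod.mk_left_injective 0),
    Prod.snd_surjective.comp limEquivProd.surjective,
    ker_snd_comp_eq_range_symm_comp_inl limEquivProd, ?_, range_limEquivProd_symm_comp_inl,
    ⟨limEquivProd⟩⟩
  ext
  simp
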